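/- Let A be an m×n array whose primitive root has dimension p×q. If row i of A (as a word of length n) has primitive root of length ℓ_i, then q = lcm(ℓ_0, ℓ_1, …, ℓ_{m-1}); similarly, if column j has primitive root of length c_j, then p = lcm(c_0, …, c_{n-1}). -/

import Mathlib

/-- k-fold concatenation (power) of a word. -/
def wpow {σ : Type*} (z : List σ) (k : ℕ) : List σ := (List.replicate k z).flatten

/-- A nonempty word is primitive if it is not a proper power. -/
def WPrimitive {σ : Type*} (w : List σ) : Prop :=
  w ≠ [] ∧ ∀ (v : List σ) (e : ℕ), 2 ≤ e → w ≠ wpow v e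

theorem fin_pos_of_mul {p m : ℕ} (i : Fin (p * m)) : 0 < m :=
  Nat.pos_of_ne_zero fun h => absurd i.isLt (by simp [h])

/-- `arrRep A p q` is `A^{p×q}`: the array `A` repeated in `p` rows and `q` columns. -/
def arrRep {σ : Type*} {m n : ℕ} (A : Fin m × Fin n → σ) (p q : ℕ) :
    Fin (p * m) × Fin (q * n) → σ :=
  fun x => A (⟨x.1.val % m, Nat.mod_lt _ (fin_pos_of_mul x.1)⟩,
              ⟨x.2.val % n, Nat.mod_lt _ (fin_pos_of_mul x.2)⟩)

/-- Equality of arrays of possibly (syntactically) different dimensions. -/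
def arrEq {σ : Type*} {m n m' n' : ℕ} (A : Fin m × Fin n → σ)
    (B : Fin m' × Fin n' → σ) : Prop :=
  m = m' ∧ n = n' ∧ ∀ (i j : ℕ) (h1 : i < m) (h2 : j < n) (h1' : i < m') (h2' : j < n'),
    A (⟨i, h1⟩, ⟨j, h2⟩) = B (⟨i, h1'⟩, ⟨j, h2'⟩)

/-- An array is primitive if it is not a nontrivial `p×q` repetition of another array. -/
def ArrPrimitive {σ : Type*} {m n : ℕ} (M : Fin m × Fin n → σ) : Prop :=
  ∀ (m' n' p q : ℕ) (A : Fin m' × Fin n' → σ), 0 < p → 0 < q →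
    arrEq M (arrRep A p q) → p = 1 ∧ q = 1

/-- Horizontal concatenation of arrays with equal numbers of rows. -/
def hcat {σ : Type*} {m1 m2 n1 n2 : ℕ} (h : m1 = m2)
    (A : Fin m1 × Fin n1 → σ) (B : Fin m2 × Fin n2 → σ) :
    Fin m1 × Fin (n1 + n2) → σ :=
  fun x => if hn : x.2.val < n1 then A (x.1, ⟨x.2.val, hn⟩)
           else B (⟨x.1.val, h ▸ x.1.isLt⟩, ⟨x.2.val - n1, by have := x.2.isLt; omega⟩)

/-- Vertical concatenation of arrays with equal numbers of columns. -/
def vcat {σ : Type*} {m1 m2 n1 n2 : ℕ} (h : n1 = n2)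
    (A : Fin m1 × Fin n1 → σ) (B : Fin m2 × Fin n2 → σ) :
    Fin (m1 + m2) × Fin n1 → σ :=
  fun x => if hm : x.1.val < m1 then A (⟨x.1.val, hm⟩, x.2)
           else B (⟨x.1.val - m1, by have := x.1.isLt; omega⟩, ⟨x.2.val, h ▸ x.2.isLt⟩)

/-- The word over the alphabet of columns corresponding to an array. -/
def colWord {σ : Type*} {m n : ℕ} (A : Fin m × Fin n → σ) : List (Fin m → σ) :=
  List.ofFn fun j => fun i => A (i, j)

/-- Row `i` of an array, as a word. -/
def rowWord {σ : Type*} {m n : ℕ} (A : Fin m × Fin n → σ) (i : Fin m) : List σ :=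
  List.ofFn fun j => A (i, j)

/-- Column `j` of an array, as a word. -/
def colAt {σ : Type*} {m n : ℕ} (A : Fin m × Fin n → σ) (j : Fin n) : List σ :=
  List.ofFn fun i => A (i, j)

/-- Row-major reading of an array. -/
def rowMajor {σ : Type*} {m n : ℕ} (A : Fin m × Fin n → σ) : List σ :=
  (List.ofFn fun i => rowWord A i).flatten

/-- `{x,y}*`: words that are concatenations of copies of `x` and `y`. -/
def InStar {σ : Type*} (x y w : List σ) : Prop :=
  ∃ L : List (List σ), (∀ u ∈ L, u = x ∨ u = y) ∧ w = L.flatten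

/-!
A word `z ^ e` with `z` primitive and `e > 0` is fixed by rotation by `d` exactly when `|z| ∣ d`:
rotation periods are closed under `gcd`, and a period `g ∣ |z|` with `g < |z|` would make `z` a
proper power of its prefix of length `g`. So the rotations fixing every row of `A` are those by
multiples of `lcm ℓ`. As `A = P^{i×j}`, they are also the rotations fixing every row of `P`, and
since `P` is primitive these are the multiples of `q`: a common row period `g ∣ q` exhibits `P` as
a horizontal power of its first `g` columns. Columns are rows of the transpose.
-/

namespace List

variable {α : Type*}

theorem iterate_rotate_one (l : List α) (n : ℕ) :
    (fun l : List α => l.rotate 1)^[n] l = l.rotate n := by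
  induction n with
  | zero => simp
  | succ n ih => rw [Function.iterate_succ_apply', ih, rotate_rotate]

theorem isPeriodicPt_rotate_one_iff {l : List α} {n : ℕ} :
    Function.IsPeriodicPt (fun l : List α => l.rotate 1) n l ↔ l.rotate n = l := by
  rw [Function.IsPeriodicPt, Function.IsFixedPt, iterate_rotate_one]

theorem rotate_eq_self_of_dvd {l : List α} {d k : ℕ} (h : l.rotate d = l) (hdk : d ∣ k) :
    l.rotate k = l :=
  isPeriodicPt_rotate_one_iff.1 ((isPeriodicPt_rotate_one_iff.2 h).trans_dvd hdk)

theorem rotate_gcd_eq_self {l : List α} {a b : ℕ} (ha : l.rotate a = l) (hb : l.rotate b = l) :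
    l.rotate (a.gcd b) = l :=
  isPeriodicPt_rotate_one_iff.1
    ((isPeriodicPt_rotate_one_iff.2 ha).gcd (isPeriodicPt_rotate_one_iff.2 hb))

theorem getElem_mod_of_rotate_eq_self {l : List α} {g t : ℕ} (h : l.rotate g = l)
    (ht : t < l.length) : l[t % g]'((Nat.mod_le t g).trans_lt ht) = l[t] := by
  have hmul : l.rotate (g * (t / g)) = l := rotate_eq_self_of_dvd h (dvd_mul_right g _)
  simpa only [hmul, Nat.mod_add_div, Nat.mod_eq_of_lt ht] using
    getElem_rotate l (g * (t / g)) (t % g) (by rw [hmul]; exact (Nat.mod_le t g).trans_lt ht)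

end List

section Words

variable {σ : Type*}

theorem wpow_succ (z : List σ) (k : ℕ) : wpow z (k + 1) = z ++ wpow z k := by
  simp [wpow, List.replicate_succ]

theorem length_wpow (z : List σ) (k : ℕ) : (wpow z k).length = k * z.length := by
  simp [wpow]

theorem getElem_wpow {z : List σ} {k t : ℕ} (ht : t < (wpow z k).length) :
    (wpow z k)[t] = z[t % z.length]'(Nat.mod_lt _ (Nat.pos_of_ne_zero fun h => by
      simp [length_wpow, h] at ht)) := by
  induction k generalizing t with
  | zero => simp [length_wpow] at ht
  | succ k ih =>
    simp only [wpow_succ]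
    by_cases h : t < z.length
    · simp [List.getElem_append_left h, Nat.mod_eq_of_lt h]
    · rw [List.getElem_append_right (by omega), ih]
      simp [Nat.mod_eq_sub_mod (not_lt.1 h)]

theorem rotate_wpow (z : List σ) (k d : ℕ) : (wpow z k).rotate d = wpow (z.rotate d) k := by
  apply List.ext_getElem (by simp [length_wpow])
  intro t _ _
  rw [List.getElem_rotate, getElem_wpow, getElem_wpow, List.getElem_rotate]
  simp only [List.length_rotate, length_wpow, Nat.mod_mod_of_dvd _ (dvd_mul_left _ _),
    Nat.mod_add_mod]

theorem rotate_wpow_eq_self_iff {z : List σ} {k d : ℕ} (hk : 0 < k) :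
    (wpow z k).rotate d = wpow z k ↔ z.rotate d = z := by
  rw [rotate_wpow]
  refine ⟨fun h => ?_, fun h => by rw [h]⟩
  obtain ⟨k, rfl⟩ := Nat.exists_eq_succ_of_ne_zero hk.ne'
  rw [wpow_succ, wpow_succ] at h
  exact (List.append_inj h (List.length_rotate z d)).1

theorem eq_wpow_take_of_rotate_eq_self {l : List σ} {g : ℕ} (h : l.rotate g = l)
    (hg : g ∣ l.length) : l = wpow (l.take g) (l.length / g) := by
  apply List.ext_getElem
  · rcases Nat.eq_zero_or_pos l.length with h0 | h0
    · simp [h0, length_wpow]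
    · rw [length_wpow, List.length_take, min_eq_left (Nat.le_of_dvd h0 hg), Nat.div_mul_cancel hg]
  · intro t h1 _
    have hgl : g ≤ l.length := Nat.le_of_dvd (by omega) hg
    rw [getElem_wpow, List.getElem_take]
    simp only [List.length_take, min_eq_left hgl]
    exact (l.getElem_mod_of_rotate_eq_self h h1).symm

theorem WPrimitive.rotate_eq_self_iff {z : List σ} (hz : WPrimitive z) {d : ℕ} :
    z.rotate d = z ↔ z.length ∣ d := by
  refine ⟨fun h => ?_, fun h => List.rotate_eq_self_of_dvd z.rotate_length h⟩
  have hgz : z.length.gcd d ∣ z.length := Nat.gcd_dvd_left _ _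
  have hzg := eq_wpow_take_of_rotate_eq_self (List.rotate_gcd_eq_self z.rotate_length h) hgz
  have hz0 : 0 < z.length := List.length_pos_iff.2 hz.1
  have hlt : z.length / z.length.gcd d < 2 := not_le.1 fun h2 => hz.2 _ _ h2 hzg
  have hpos : 0 < z.length / z.length.gcd d :=
    Nat.div_pos (Nat.le_of_dvd hz0 hgz) (Nat.gcd_pos_of_pos_left _ hz0)
  rw [← Nat.eq_of_dvd_of_div_eq_one hgz (by omega)]
  exact Nat.gcd_dvd_right _ _

theorem rotate_wpow_eq_self_iff_dvd {z : List σ} (hz : WPrimitive z) {k d : ℕ} (hk : 0 < k) :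
    (wpow z k).rotate d = wpow z k ↔ z.length ∣ d :=
  (rotate_wpow_eq_self_iff hk).trans hz.rotate_eq_self_iff

end Words

section Arrays

variable {σ : Type*} {p q : ℕ}

theorem eq_of_arrEq {m n : ℕ} {A B : Fin m × Fin n → σ} (h : arrEq A B) : A = B :=
  funext fun ⟨⟨a, ha⟩, ⟨b, hb⟩⟩ => h.2.2 a b ha hb ha hb

theorem length_rowWord {m n : ℕ} (A : Fin m × Fin n → σ) (a : Fin m) :
    (rowWord A a).length = n := by
  simp [rowWord]

theorem rowWord_arrRep (P : Fin p × Fin q → σ) (i j : ℕ) (a : Fin (i * p)) :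
    rowWord (arrRep P i j) a = wpow (rowWord P ⟨a % p, Nat.mod_lt _ (fin_pos_of_mul a)⟩) j := by
  apply List.ext_getElem (by simp [length_rowWord, length_wpow])
  intro t _ _
  rw [getElem_wpow]
  simp [rowWord, arrRep]

theorem rotate_rowWord_arrRep_iff (P : Fin p × Fin q → σ) {i j d : ℕ} (hi : 0 < i)
    (hj : 0 < j) :
    (∀ a, (rowWord (arrRep P i j) a).rotate d = rowWord (arrRep P i j) a) ↔
      ∀ b, (rowWord P b).rotate d = rowWord P b := by
  simp only [rowWord_arrRep, rotate_wpow_eq_self_iff hj]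
  refine ⟨fun h b => ?_, fun h a => h _⟩
  have hb : b.val < i * p := b.2.trans_le (Nat.le_mul_of_pos_left p hi)
  simpa [Nat.mod_eq_of_lt b.2] using h ⟨b, hb⟩

theorem arrEq_arrRep_of_rotate_rowWord {P : Fin p × Fin q → σ} {g : ℕ} (hgq : g ≤ q)
    (hg : g ∣ q) (h : ∀ a, (rowWord P a).rotate g = rowWord P a) :
    arrEq P (arrRep (fun x : Fin p × Fin g => P (x.1, Fin.castLE hgq x.2)) 1 (q / g)) := by
  refine ⟨(one_mul p).symm, (Nat.div_mul_cancel hg).symm, fun a b ha hb _ _ => ?_⟩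
  have := (rowWord P ⟨a, ha⟩).getElem_mod_of_rotate_eq_self (h _)
    (by rwa [length_rowWord])
  simpa [rowWord, arrRep, Nat.mod_eq_of_lt ha] using this.symm

theorem ArrPrimitive.pos_right {P : Fin p × Fin q → σ} (hP : ArrPrimitive P) : 0 < q := by
  refine Nat.pos_of_ne_zero fun hq => ?_
  subst hq
  -- an array without columns is its own `1 × 2` power
  have := hP p 0 1 2 P one_pos two_pos
    ⟨(one_mul p).symm, rfl, fun _ _ _ h => absurd h (Nat.not_lt_zero _)⟩
  omega

theorem ArrPrimitive.rotate_rowWord_eq_self_iff {P : Fin p × Fin q → σ} (hP : ArrPrimitive P)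
    {d : ℕ} : (∀ a, (rowWord P a).rotate d = rowWord P a) ↔ q ∣ d := by
  have hrow_q : ∀ a, (rowWord P a).rotate q = rowWord P a := fun a => by
    simpa [length_rowWord] using (rowWord P a).rotate_length
  refine ⟨fun h => ?_, fun h a => List.rotate_eq_self_of_dvd (hrow_q a) h⟩
  have hgq : d.gcd q ∣ q := Nat.gcd_dvd_right d q
  have hle : d.gcd q ≤ q := Nat.le_of_dvd hP.pos_right hgq
  obtain ⟨-, hone⟩ := hP _ _ _ _ _ one_pos
    (Nat.div_pos hle (Nat.gcd_pos_of_pos_right d hP.pos_right))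
    (arrEq_arrRep_of_rotate_rowWord hle hgq fun a => List.rotate_gcd_eq_self (h a) (hrow_q a))
  rw [← Nat.eq_of_dvd_of_div_eq_one hgq hone]
  exact Nat.gcd_dvd_left d q

theorem ArrPrimitive.width_eq_lcm_rowRootLength {P : Fin p × Fin q → σ} (hP : ArrPrimitive P)
    {i j : ℕ} (hi : 0 < i) (hj : 0 < j) (ℓ : Fin (i * p) → ℕ)
    (hrow : ∀ a, ∃ z : List σ, WPrimitive z ∧ z.length = ℓ a ∧
      ∃ e : ℕ, 0 < e ∧ rowWord (arrRep P i j) a = wpow z e) :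
    q = Finset.univ.lcm ℓ := by
  have hℓ : ∀ a d,
      (rowWord (arrRep P i j) a).rotate d = rowWord (arrRep P i j) a ↔ ℓ a ∣ d := by
    intro a d
    obtain ⟨z, hz, hzℓ, e, he, hw⟩ := hrow a
    rw [hw, ← hzℓ]
    exact rotate_wpow_eq_self_iff_dvd hz he
  refine Nat.dvd_right_iff_eq.1 fun d => ?_
  rw [← hP.rotate_rowWord_eq_self_iff, ← rotate_rowWord_arrRep_iff P hi hj, Finset.lcm_dvd_iff]
  simp [hℓ]

def arrTranspose {m n : ℕ} (A : Fin m × Fin n → σ) : Fin n × Fin m → σ :=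
  fun x => A (x.2, x.1)

theorem ArrPrimitive.transpose {P : Fin p × Fin q → σ} (hP : ArrPrimitive P) :
    ArrPrimitive (arrTranspose P) :=
  fun _ _ a b B ha hb ⟨hq, hp, h⟩ =>
    (hP _ _ b a (arrTranspose B) hb ha
      ⟨hp, hq, fun x y hx hy hx' hy' => h y x hy hx hy' hx'⟩).symm

end Arrays

theorem stmt16_general {σ : Type*} {m n p q : ℕ}
    (A : Fin m × Fin n → σ) (P : Fin p × Fin q → σ) (hP : ArrPrimitive P)
    (i j : ℕ) (hi : 0 < i) (hj : 0 < j) (hroot : arrEq A (arrRep P i j))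
    (ℓ : Fin m → ℕ) (c : Fin n → ℕ)
    (hrow : ∀ i0 : Fin m, ∃ z : List σ, WPrimitive z ∧ z.length = ℓ i0 ∧
      ∃ e : ℕ, 0 < e ∧ rowWord A i0 = wpow z e)
    (hcol : ∀ j0 : Fin n, ∃ z : List σ, WPrimitive z ∧ z.length = c j0 ∧
      ∃ e : ℕ, 0 < e ∧ colAt A j0 = wpow z e) :
    q = Finset.univ.lcm ℓ ∧ p = Finset.univ.lcm c := by
  obtain ⟨rfl, rfl, hA⟩ := hroot
  obtain rfl := eq_of_arrEq ⟨rfl, rfl, hA⟩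
  -- the columns of `P^{i×j}` are, definitionally, the rows of `(arrTranspose P)^{j×i}`
  exact ⟨hP.width_eq_lcm_rowRootLength hi hj ℓ hrow,
    hP.transpose.width_eq_lcm_rowRootLength hj hi c hcol⟩

theorem stmt16 {σ : Type*} {m n p q : ℕ} (hm : 0 < m) (hn : 0 < n)
    (A : Fin m × Fin n → σ) (P : Fin p × Fin q → σ) (hP : ArrPrimitive P)
    (i j : ℕ) (hi : 0 < i) (hj : 0 < j) (hroot : arrEq A (arrRep P i j))
    (ℓ : Fin m → ℕ) (c : Fin n → ℕ)
    (hrow : ∀ i0 : Fin m, ∃ z : List σ, WPrimitive z ∧ z.length = ℓ i0 ∧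
      ∃ e : ℕ, 0 < e ∧ rowWord A i0 = wpow z e)
    (hcol : ∀ j0 : Fin n, ∃ z : List σ, WPrimitive z ∧ z.length = c j0 ∧
      ∃ e : ℕ, 0 < e ∧ colAt A j0 = wpow z e) :
    q = Finset.univ.lcm ℓ ∧ p = Finset.univ.lcm c :=
  stmt16_general A P hP i j hi hj hroot ℓ c hrow hcol
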